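/- arXiv:math/0602561 — 3 statements merged into one kernel-verified Lean document; each statement's English description precedes it below -/
import Mathlib

section
/- For a multihomomorphism σ from C_{2r+1} to K_n of dimension n−3 with σ(v−1) ∪ σ(v+1) = [n−1] (so σ ∈ B_v), we have |σ(v−1)| + |σ(v+1)| = n − 1, σ(w) is a singleton for every w ∉ {v−1, v+1}, and σ(v) = {n}. -/
/-!
Since `dim σ = ∑ (|σ w| - 1)` and every `|σ w| ≥ 1`, the two neighbours of `v` alone contribute
`|σ(v-1)| + |σ(v+1)| - 2 ≥ |[n-1]| - 2 = n - 3` to the dimension; as the dimension is exactly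
`n - 3`, this bound is attained and every other vertex carries a singleton. Finally `σ v` is
disjoint from both neighbours, hence from `[n-1]`, so the nonempty set `σ v ⊆ [n]` is `{n}`.
-/

/-- A multihomomorphism from the cycle `C_{2r+1}` to the complete graph `K_n` on `[n]`. -/
def Multihom (r n : ℕ) (σ : ZMod (2*r+1) → Finset ℕ) : Prop :=
  (∀ v, (σ v).Nonempty ∧ σ v ⊆ Finset.Icc 1 n) ∧
  ∀ u v : ZMod (2*r+1), u - v = 1 → Disjoint (σ u) (σ v)

/-- The dimension of a multihomomorphism: `∑_v (|σ(v)| - 1)`. -/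
def mdim (r : ℕ) (σ : ZMod (2*r+1) → Finset ℕ) : ℕ :=
  ∑ v : ZMod (2*r+1), ((σ v).card - 1)

theorem ZMod.sub_one_ne_add_one {m : ℕ} (hm : 3 ≤ m) (v : ZMod m) : v - 1 ≠ v + 1 := by
  intro h
  have htwo : ((2 : ℕ) : ZMod m) = 0 := by
    push_cast
    linear_combination -h
  rw [ZMod.natCast_eq_zero_iff] at htwo
  exact absurd (Nat.le_of_dvd two_pos htwo) (by omega)

theorem mdim_eq_add_add_sum_compl {r : ℕ} (σ : ZMod (2*r+1) → Finset ℕ) {a b : ZMod (2*r+1)}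
    (hab : a ≠ b) :
    mdim r σ = ((σ a).card - 1) + ((σ b).card - 1) + ∑ w ∈ {a, b}ᶜ, ((σ w).card - 1) := by
  rw [mdim, ← Finset.sum_add_sum_compl {a, b}, Finset.sum_pair hab]

namespace Multihom

variable {r n : ℕ} {σ : ZMod (2*r+1) → Finset ℕ}

theorem one_le_card (hσ : Multihom r n σ) (w : ZMod (2*r+1)) : 1 ≤ (σ w).card :=
  Finset.card_pos.mpr (hσ.1 w).1

theorem disjoint_neighbors (hσ : Multihom r n σ) (v : ZMod (2*r+1)) :
    Disjoint (σ v) (σ (v - 1) ∪ σ (v + 1)) :=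
  Finset.disjoint_union_right.mpr
    ⟨hσ.2 v (v - 1) (by ring), (hσ.2 (v + 1) v (by ring)).symm⟩

theorem eq_singleton_of_neighbors_cover (hσ : Multihom r n σ) {v : ZMod (2*r+1)}
    (hv : σ (v - 1) ∪ σ (v + 1) = Finset.Icc 1 (n - 1)) : σ v = {n} := by
  refine (hσ.1 v).1.subset_singleton_iff.mp fun x hx => ?_
  have hx_le : x ∈ Finset.Icc 1 n := (hσ.1 v).2 hx
  have hx_gt : x ∉ Finset.Icc 1 (n - 1) :=
    hv ▸ Finset.disjoint_left.mp (hσ.disjoint_neighbors v) hx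
  simp only [Finset.mem_Icc, Finset.mem_singleton] at hx_le hx_gt ⊢
  omega

theorem card_eq_one_of_sum_compl_eq_zero (hσ : Multihom r n σ) {s : Finset (ZMod (2*r+1))}
    (hs : ∑ w ∈ sᶜ, ((σ w).card - 1) = 0) {w : ZMod (2*r+1)} (hw : w ∉ s) :
    (σ w).card = 1 := by
  have := Finset.sum_eq_zero_iff.mp hs w (Finset.mem_compl.mpr hw)
  have := hσ.one_le_card w
  omega

end Multihom

theorem structure_of_B_cell (r n : ℕ) (hr : 1 ≤ r) (hn : 4 ≤ n)
    (σ : ZMod (2*r+1) → Finset ℕ) (hσ : Multihom r n σ)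
    (v : ZMod (2*r+1)) (hdim : mdim r σ = n - 3)
    (hv : σ (v - 1) ∪ σ (v + 1) = Finset.Icc 1 (n-1)) :
    (σ (v - 1)).card + (σ (v + 1)).card = n - 1 ∧
    (∀ w : ZMod (2*r+1), w ≠ v - 1 → w ≠ v + 1 → (σ w).card = 1) ∧
    σ v = {n} := by
  have hsplit := mdim_eq_add_add_sum_compl σ (ZMod.sub_one_ne_add_one (by omega) v)
  have hcover : n - 1 ≤ (σ (v - 1)).card + (σ (v + 1)).card := by
    simpa [hv] using Finset.card_union_le (σ (v - 1)) (σ (v + 1))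
  have h₁ := hσ.one_le_card (v - 1)
  have h₂ := hσ.one_le_card (v + 1)
  have hrest : ∑ w ∈ {v - 1, v + 1}ᶜ, ((σ w).card - 1) = 0 := by omega
  refine ⟨by omega, fun w hw₁ hw₂ => ?_, hσ.eq_singleton_of_neighbors_cover hv⟩
  exact hσ.card_eq_one_of_sum_compl_eq_zero hrest (by simp [hw₁, hw₂])
end

section
/- Fix n ≥ 3, r ≥ 1, and a vertex v of C_{2r+1}. Let τ ∈ A_{v−1} (an (n−2)-dimensional multihomomorphism with τ(v−1) = [n−1]). Then τ has exactly one codimension-one face σ (obtained by removing a single element from τ(w) for some w with |τ(w)| ≥ 2) that lies in B_v; that is, the number of pairs (w, x) with x ∈ τ(w), |τ(w)| ≥ 2, such that the function σ defined by σ(w) = τ(w) \ {x} and σ(u) = τ(u) for u ≠ w lies in B_v, is exactly 1. -/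
/-- Membership in `A_u`: a multihomomorphism of dimension `n-2` with value `[n-1]` at `u`. -/
def InA (r n : ℕ) (u : ZMod (2*r+1)) (τ : ZMod (2*r+1) → Finset ℕ) : Prop :=
  Multihom r n τ ∧ mdim r τ = n - 2 ∧ τ u = Finset.Icc 1 (n-1)

/-- Membership in `B_v`: a multihomomorphism of dimension `n-3` with
`σ(v-1) ∪ σ(v+1) = [n-1]`. -/
def InB (r n : ℕ) (v : ZMod (2*r+1)) (σ : ZMod (2*r+1) → Finset ℕ) : Prop :=
  Multihom r n σ ∧ mdim r σ = n - 3 ∧ σ (v - 1) ∪ σ (v + 1) = Finset.Icc 1 (n-1)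

open Classical in
theorem unique_facet_in_B (r n : ℕ) (hr : 1 ≤ r) (hn : 3 ≤ n)
    (v : ZMod (2*r+1)) (τ : ZMod (2*r+1) → Finset ℕ)
    (hτ : InA r n (v - 1) τ) :
    ((Finset.univ ×ˢ Finset.Icc 1 n).filter
        (fun p : ZMod (2*r+1) × ℕ =>
          p.2 ∈ τ p.1 ∧ 2 ≤ (τ p.1).card ∧
            InB r n v (Function.update τ p.1 (τ p.1 \ {p.2})))).card = 1 := by
  haveI : NeZero (2*r+1) := ⟨by omega⟩
  obtain ⟨⟨hne, hdisj⟩, hdim, hval⟩ := hτ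
  -- nonzero casts
  have hk : ∀ k : ℕ, 0 < k → k < 2*r+1 → (k : ZMod (2*r+1)) ≠ 0 := by
    intro k hk1 hk2 h
    have := (ZMod.natCast_eq_zero_iff k (2*r+1)).mp h
    have := Nat.le_of_dvd hk1 this
    omega
  have h1 : (1 : ZMod (2*r+1)) ≠ 0 := by
    have := hk 1 (by omega) (by omega); simpa using this
  have h2 : (2 : ZMod (2*r+1)) ≠ 0 := by
    have := hk 2 (by omega) (by omega); simpa using this
  have hv1 : v + 1 ≠ v - 1 := by
    intro h
    apply h2
    rw [show (2:ZMod (2*r+1)) = (v+1) - (v-1) by ring]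
    exact sub_eq_zero_of_eq h
  have hvv1 : v ≠ v - 1 := by
    intro h
    apply h1
    rw [show (1:ZMod (2*r+1)) = v - (v-1) by ring]
    exact sub_eq_zero_of_eq h
  -- card of τ (v-1)
  have hcardv1 : (τ (v-1)).card = n - 1 := by
    rw [hval, Nat.card_Icc]; omega
  -- every other vertex is a singleton
  have hsum : ((τ (v-1)).card - 1) + ∑ w ∈ Finset.univ.erase (v-1), ((τ w).card - 1)
      = n - 2 := by
    have h := Finset.add_sum_erase Finset.univ (fun w => (τ w).card - 1)
      (Finset.mem_univ (v-1))
    unfold mdim at hdim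
    omega
  have hrest : ∑ w ∈ Finset.univ.erase (v-1), ((τ w).card - 1) = 0 := by omega
  have hcard1 : ∀ w, w ≠ v - 1 → (τ w).card = 1 := by
    intro w hw
    have h0 : (τ w).card - 1 = 0 :=
      (Finset.sum_eq_zero_iff.mp hrest) w (Finset.mem_erase.mpr ⟨hw, Finset.mem_univ w⟩)
    have hpos : 0 < (τ w).card := Finset.card_pos.mpr (hne w).1
    omega
  -- τ v = {n}
  obtain ⟨a, ha⟩ := Finset.card_eq_one.mp (hcard1 v hvv1)
  have han : a = n := by
    have hmem : a ∈ Finset.Icc 1 n := (hne v).2 (by rw [ha]; exact Finset.mem_singleton_self a)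
    have hdj : Disjoint (τ v) (τ (v-1)) := hdisj v (v-1) (by ring)
    have : a ∉ Finset.Icc 1 (n-1) := by
      intro hmem'
      exact (Finset.disjoint_left.mp hdj (by rw [ha]; exact Finset.mem_singleton_self a))
        (hval ▸ hmem')
    rw [Finset.mem_Icc] at hmem this
    omega
  -- τ (v+1) = {y}, y ∈ [n-1]
  obtain ⟨y, hy⟩ := Finset.card_eq_one.mp (hcard1 (v+1) hv1)
  have hymem : y ∈ Finset.Icc 1 (n-1) := by
    have hmem : y ∈ Finset.Icc 1 n :=
      (hne (v+1)).2 (by rw [hy]; exact Finset.mem_singleton_self y)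
    have hdj : Disjoint (τ (v+1)) (τ v) := hdisj (v+1) v (by ring)
    have hyn : y ≠ n := by
      intro h
      exact (Finset.disjoint_left.mp hdj (by rw [hy]; exact Finset.mem_singleton_self y))
        (by rw [ha, han, h]; exact Finset.mem_singleton_self n)
    rw [Finset.mem_Icc] at hmem ⊢
    omega
  have hymem' : y ∈ τ (v-1) := hval ▸ hymem
  -- the unique pair
  rw [Finset.card_eq_one]
  refine ⟨(v-1, y), Finset.eq_singleton_iff_unique_mem.mpr ⟨?_, ?_⟩⟩
  · -- membership
    rw [Finset.mem_filter]
    dsimp only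
    refine ⟨Finset.mem_product.mpr ⟨Finset.mem_univ _, ?_⟩, hymem', by omega, ?_, ?_, ?_⟩
    · exact Finset.Icc_subset_Icc le_rfl (by omega) hymem
    · -- Multihom
      have hsub : ∀ x, Function.update τ (v-1) (τ (v-1) \ {y}) x ⊆ τ x := by
        intro x
        by_cases hx : x = v - 1
        · subst hx; rw [Function.update_self]; exact Finset.sdiff_subset
        · rw [Function.update_of_ne hx]
      refine ⟨fun w => ⟨?_, (hsub w).trans (hne w).2⟩,
        fun a b hab => Disjoint.mono (hsub a) (hsub b) (hdisj a b hab)⟩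
      by_cases hw : w = v - 1
      · subst hw
        rw [Function.update_self]
        rw [← Finset.card_pos, Finset.card_sdiff_of_subset (by simpa using hymem'),
          Finset.card_singleton, hcardv1]
        omega
      · rw [Function.update_of_ne hw]; exact (hne w).1
    · -- mdim
      unfold mdim
      rw [← Finset.add_sum_erase _ _ (Finset.mem_univ (v-1)), Function.update_self,
        Finset.card_sdiff_of_subset (by simpa using hymem'), Finset.card_singleton, hcardv1]
      have : ∑ w ∈ Finset.univ.erase (v-1),
          ((Function.update τ (v-1) (τ (v-1) \ {y}) w).card - 1) = 0 := by
        apply Finset.sum_eq_zero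
        intro w hw
        rw [Function.update_of_ne (Finset.mem_erase.mp hw).1,
          hcard1 w (Finset.mem_erase.mp hw).1]
        omega
      omega
    · -- union
      rw [Function.update_self, Function.update_of_ne hv1, hval, hy,
        Finset.sdiff_union_of_subset (by simpa using hymem)]
  · -- uniqueness
    rintro ⟨w, x⟩ hp
    rw [Finset.mem_filter] at hp
    dsimp only at hp
    obtain ⟨-, hx, hcw, -, -, hunion⟩ := hp
    have hwv : w = v - 1 := by
      by_contra hw
      rw [hcard1 w hw] at hcw; omega
    subst hwv
    have hxmem : x ∈ Finset.Icc 1 (n-1) := hval ▸ hx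
    rw [Function.update_self, Function.update_of_ne hv1, hval, hy] at hunion
    have : x ∈ (Finset.Icc 1 (n-1) \ {x}) ∪ {y} := by rw [hunion]; exact hxmem
    rcases Finset.mem_union.mp this with h | h
    · exact absurd (Finset.mem_sdiff.mp h).2 (by simp)
    · rw [Finset.mem_singleton] at h
      rw [h]
end

section
/- The set A_0 of (n−2)-dimensional multihomomorphisms σ from C_{2r+1} to K_n with σ(0) = [n−1] is γ-invariant and γ acts on it without fixed points (for r ≥ 1, n ≥ 3); consequently the image of A_0 in the quotient by γ, counted with Z/2 multiplicities (each orbit counted twice), is the zero Z/2-chain. -/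
/-- Membership in `A_0`: a multihomomorphism of dimension `n-2` with value `[n-1]` at `0`. -/
def InA0 (r n : ℕ) (τ : ZMod (2*r+1) → Finset ℕ) : Prop :=
  Multihom r n τ ∧ mdim r τ = n - 2 ∧ τ 0 = Finset.Icc 1 (n-1)

lemma Set.even_ncard_setOf_and_eq_or_eq {α : Type*} {p : α → Prop} {x y : α}
    (hpxy : p x ↔ p y) (hne : p x → x ≠ y) : Even {z | p z ∧ (z = x ∨ z = y)}.ncard := by
  by_cases hx : p x
  · have hpair : {z | p z ∧ (z = x ∨ z = y)} = {x, y} := by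
      ext z
      constructor
      · exact fun hz => hz.2
      · rintro (rfl | rfl)
        exacts [⟨hx, .inl rfl⟩, ⟨hpxy.mp hx, .inr rfl⟩]
    rw [hpair, Set.ncard_pair (hne hx)]
    exact even_two
  · have hempty : {z | p z ∧ (z = x ∨ z = y)} = ∅ := by
      ext z
      simp only [Set.mem_ofPred_eq, Set.mem_empty_iff_false, iff_false]
      rintro ⟨hz, rfl | rfl⟩
      exacts [hx hz, hx (hpxy.mpr hz)]
    rw [hempty, Set.ncard_empty]
    exact Even.zero

lemma ZMod.neg_natCast_add_one_eq (r : ℕ) :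
    -((r : ZMod (2*r+1)) + 1) = r := by
  have h : ((2*r+1 : ℕ) : ZMod (2*r+1)) = 0 := ZMod.natCast_self _
  push_cast at h
  linear_combination -h

lemma Multihom.neg {r n : ℕ} {σ : ZMod (2*r+1) → Finset ℕ} (h : Multihom r n σ) :
    Multihom r n (fun v => σ (-v)) :=
  ⟨fun v => h.1 (-v), fun u v huv => (h.2 (-v) (-u) (by linear_combination huv)).symm⟩

lemma mdim_neg (r : ℕ) (σ : ZMod (2*r+1) → Finset ℕ) :
    mdim r (fun v => σ (-v)) = mdim r σ :=
  Equiv.sum_comp (Equiv.neg _) (fun v => (σ v).card - 1)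

lemma InA0.neg {r n : ℕ} {σ : ZMod (2*r+1) → Finset ℕ} (h : InA0 r n σ) :
    InA0 r n (fun v => σ (-v)) :=
  ⟨h.1.neg, (mdim_neg r σ).trans h.2.1, by simpa using h.2.2⟩

lemma inA0_neg_iff {r n : ℕ} (σ : ZMod (2*r+1) → Finset ℕ) :
    InA0 r n σ ↔ InA0 r n (fun v => σ (-v)) :=
  ⟨InA0.neg, fun h => by simpa using h.neg⟩

lemma Multihom.neg_ne {r n : ℕ} {σ : ZMod (2*r+1) → Finset ℕ} (h : Multihom r n σ) :
    (fun v => σ (-v)) ≠ σ := by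
  intro hfix
  have hswap : σ ((r : ZMod (2*r+1)) + 1) = σ r := by
    rw [← congrFun hfix, ZMod.neg_natCast_add_one_eq]
  have hdisj : Disjoint (σ ((r : ZMod (2*r+1)) + 1)) (σ r) := h.2 _ _ (by ring)
  rw [hswap] at hdisj
  exact (h.1 r).1.ne_empty (disjoint_self.mp hdisj)

theorem A_zero_invariant_free_and_pushforward_zero_general (r n : ℕ) :
    (∀ σ : ZMod (2*r+1) → Finset ℕ, InA0 r n σ ↔ InA0 r n (fun v => σ (-v))) ∧
    (∀ σ : ZMod (2*r+1) → Finset ℕ, InA0 r n σ → (fun v => σ (-v)) ≠ σ) ∧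
    (∀ τ : ZMod (2*r+1) → Finset ℕ,
      Even (Set.ncard {σ : ZMod (2*r+1) → Finset ℕ |
        InA0 r n σ ∧ (σ = τ ∨ σ = fun v => τ (-v))})) :=
  ⟨inA0_neg_iff, fun _ h => h.1.neg_ne, fun τ =>
    Set.even_ncard_setOf_and_eq_or_eq (inA0_neg_iff τ) fun h heq => h.1.neg_ne heq.symm⟩

theorem A_zero_invariant_free_and_pushforward_zero (r n : ℕ) (hr : 1 ≤ r) (hn : 3 ≤ n) :
    (∀ σ : ZMod (2*r+1) → Finset ℕ, InA0 r n σ ↔ InA0 r n (fun v => σ (-v))) ∧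
    (∀ σ : ZMod (2*r+1) → Finset ℕ, InA0 r n σ → (fun v => σ (-v)) ≠ σ) ∧
    (∀ τ : ZMod (2*r+1) → Finset ℕ,
      Even (Set.ncard {σ : ZMod (2*r+1) → Finset ℕ |
        InA0 r n σ ∧ (σ = τ ∨ σ = fun v => τ (-v))})) :=
  A_zero_invariant_free_and_pushforward_zero_general r n
end
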